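/- For any two Haar wavelets on [0,1) at levels j and j' (with m = 2^j and m' = 2^{j'}), the integral of the product of their second iterated antiderivatives satisfies ∫_0^1 p_{2,j,k}(x) · p_{2,j',k'}(x) dx ≤ 1/(16 m² m'²). -/

import Mathlib

/-!
Write `r_s(x) = max (x - s) 0` and `a < b < c` for the breakpoints of `h_{j,k}`, spaced
`1/(2m)` apart. Then `h_{j,k} = 𝟙[a,∞) - 2·𝟙[b,∞) + 𝟙[c,∞)`, so integrating twice from `0 ≤ a`
gives `p₁ = r_a - 2 r_b + r_c` and `p₂ = (r_a² - 2 r_b² + r_c²)/2`. This quadratic spline vanishes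
left of `a`, equals `(b - a)² = 1/(4m²)` right of `c`, and lies between these values in between,
so the integrand is bounded by `1/(16 m² m'²)` on the unit interval.
-/

open MeasureTheory

/-- The Haar wavelet `h_{j,k}` on `[0, 1)`. -/
noncomputable def haar01 (j k : ℕ) (x : ℝ) : ℝ :=
  if (k : ℝ) / 2 ^ j ≤ x ∧ x < ((k : ℝ) + 1 / 2) / 2 ^ j then 1
  else if ((k : ℝ) + 1 / 2) / 2 ^ j ≤ x ∧ x < ((k : ℝ) + 1) / 2 ^ j then -1
  else 0

/-- First antiderivative `p_{1,j,k}` of the Haar wavelet on `[0, 1)`. -/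
noncomputable def haarP1 (j k : ℕ) (x : ℝ) : ℝ :=
  ∫ t in (0 : ℝ)..x, haar01 j k t

/-- Second iterated antiderivative `p_{2,j,k}` of the Haar wavelet on `[0, 1)`. -/
noncomputable def haarP2 (j k : ℕ) (x : ℝ) : ℝ :=
  ∫ t in (0 : ℝ)..x, haarP1 j k t

open Set Topology intervalIntegral
open scoped Interval

namespace Haar

noncomputable def heaviside (a t : ℝ) : ℝ := if a ≤ t then 1 else 0

noncomputable def ramp (a t : ℝ) : ℝ := max (t - a) 0

lemma monotone_heaviside (a : ℝ) : Monotone (heaviside a) := by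
  intro s t hst
  unfold heaviside
  split_ifs <;> linarith

lemma continuous_ramp (a : ℝ) : Continuous (ramp a) := by
  unfold ramp
  fun_prop

lemma ramp_of_le {a t : ℝ} (h : t ≤ a) : ramp a t = 0 :=
  max_eq_right (by linarith)

lemma ramp_of_ge {a t : ℝ} (h : a ≤ t) : ramp a t = t - a :=
  max_eq_left (by linarith)

lemma hasDerivWithinAt_ramp_Ioi (a x : ℝ) :
    HasDerivWithinAt (ramp a) (heaviside a x) (Ioi x) x := by
  unfold heaviside
  split_ifs with h
  · refine ((hasDerivAt_id x).sub_const a).hasDerivWithinAt.congr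
      (fun t ht => ramp_of_ge (h.trans (le_of_lt ht))) (ramp_of_ge h)
  · have hzero : ramp a =ᶠ[𝓝 x] fun _ => 0 := by
      filter_upwards [Iio_mem_nhds (not_le.mp h)] with t ht
      exact ramp_of_le ht.le
    exact ((hasDerivAt_const x (0 : ℝ)).congr_of_eventuallyEq hzero).hasDerivWithinAt

lemma hasDerivAt_ramp_sq_div_two (a x : ℝ) :
    HasDerivAt (fun t => ramp a t ^ 2 / 2) (ramp a x) x := by
  refine hasDerivAt_of_hasDerivAt_of_ne' (x := a) (fun y hy => ?_)
    (((continuous_ramp a).pow 2).div_const 2).continuousAt (continuous_ramp a).continuousAt x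
  rcases hy.lt_or_gt with hy | hy
  · have hzero : (fun t => ramp a t ^ 2 / 2) =ᶠ[𝓝 y] fun _ => 0 := by
      filter_upwards [Iio_mem_nhds hy] with t ht
      simp [ramp_of_le ht.le]
    rw [ramp_of_le hy.le]
    exact (hasDerivAt_const y (0 : ℝ)).congr_of_eventuallyEq hzero
  · have hsq : (fun t => ramp a t ^ 2 / 2) =ᶠ[𝓝 y] fun t => (t - a) ^ 2 / 2 := by
      filter_upwards [Ioi_mem_nhds hy] with t ht
      rw [ramp_of_ge ht.le]
    have hd : HasDerivAt (fun t => (t - a) ^ 2 / 2) (y - a) y :=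
      ((((hasDerivAt_id' y).sub_const a).fun_pow 2).div_const 2).congr_deriv (by norm_num)
    rw [ramp_of_ge hy.le]
    exact hd.congr_of_eventuallyEq hsq

lemma integral_heaviside (a x y : ℝ) : ∫ t in x..y, heaviside a t = ramp a y - ramp a x :=
  integral_eq_sub_of_hasDeriv_right (continuous_ramp a).continuousOn
    (fun t _ => hasDerivWithinAt_ramp_Ioi a t) (monotone_heaviside a).intervalIntegrable

lemma integral_ramp (a x y : ℝ) :
    ∫ t in x..y, ramp a t = ramp a y ^ 2 / 2 - ramp a x ^ 2 / 2 :=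
  integral_eq_sub_of_hasDerivAt (fun t _ => hasDerivAt_ramp_sq_div_two a t)
    ((continuous_ramp a).intervalIntegrable x y)

lemma integral_sub_two_mul_add {f g h : ℝ → ℝ} {x y : ℝ} (hf : IntervalIntegrable f volume x y)
    (hg : IntervalIntegrable g volume x y) (hh : IntervalIntegrable h volume x y) :
    ∫ t in x..y, (f t - 2 * g t + h t) = (∫ t in x..y, f t) - 2 * (∫ t in x..y, g t)
      + ∫ t in x..y, h t := by
  rw [integral_add (hf.sub (hg.const_mul 2)) hh, integral_sub hf (hg.const_mul 2),
    intervalIntegral.integral_const_mul]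

lemma ite_Ico_eq_heaviside {a b c : ℝ} (hab : a ≤ b) (hbc : b ≤ c) (t : ℝ) :
    (if a ≤ t ∧ t < b then (1 : ℝ) else if b ≤ t ∧ t < c then -1 else 0) =
      heaviside a t - 2 * heaviside b t + heaviside c t := by
  unfold heaviside
  split_ifs <;> grind

lemma abs_ramp_sq_second_difference_le {a b c : ℝ} (hab : a ≤ b) (hcb : c - b = b - a) (x : ℝ) :
    |(ramp a x ^ 2 - 2 * ramp b x ^ 2 + ramp c x ^ 2) / 2| ≤ (b - a) ^ 2 := by
  rw [abs_le]
  rcases le_total x a with hxa | hax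
  · rw [ramp_of_le hxa, ramp_of_le (hxa.trans hab), ramp_of_le (hxa.trans (by linarith))]
    constructor <;> nlinarith
  rcases le_total x b with hxb | hbx
  · rw [ramp_of_ge hax, ramp_of_le hxb, ramp_of_le (hxb.trans (by linarith))]
    constructor <;> nlinarith
  rcases le_total x c with hxc | hcx
  · rw [ramp_of_ge hax, ramp_of_ge hbx, ramp_of_le hxc]
    constructor <;> nlinarith
  · rw [ramp_of_ge hax, ramp_of_ge hbx, ramp_of_ge hcx]
    constructor <;> nlinarith

end Haar

open Haar

lemma haar01_eq_heaviside (j k : ℕ) (t : ℝ) :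
    haar01 j k t = heaviside (k / 2 ^ j) t - 2 * heaviside ((k + 1 / 2) / 2 ^ j) t
      + heaviside ((k + 1) / 2 ^ j) t :=
  ite_Ico_eq_heaviside (by gcongr; norm_num) (by gcongr; norm_num) t

lemma haarP1_eq_ramp (j k : ℕ) (x : ℝ) :
    haarP1 j k x = ramp (k / 2 ^ j) x - 2 * ramp ((k + 1 / 2) / 2 ^ j) x
      + ramp ((k + 1) / 2 ^ j) x := by
  have hint (s : ℝ) : IntervalIntegrable (heaviside s) volume 0 x := (monotone_heaviside s).intervalIntegrable
  unfold haarP1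
  simp_rw [haar01_eq_heaviside]
  rw [integral_sub_two_mul_add (hint _) (hint _) (hint _)]
  simp (disch := positivity) only [integral_heaviside, ramp_of_le]
  ring

lemma haarP2_eq_ramp_sq (j k : ℕ) (x : ℝ) :
    haarP2 j k x = (ramp (k / 2 ^ j) x ^ 2 - 2 * ramp ((k + 1 / 2) / 2 ^ j) x ^ 2
      + ramp ((k + 1) / 2 ^ j) x ^ 2) / 2 := by
  have hint (s : ℝ) : IntervalIntegrable (ramp s) volume 0 x := (continuous_ramp s).intervalIntegrable 0 x
  unfold haarP2
  simp_rw [haarP1_eq_ramp]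
  rw [integral_sub_two_mul_add (hint _) (hint _) (hint _)]
  simp (disch := positivity) only [integral_ramp, ramp_of_le]
  ring

lemma abs_haarP2_le (j k : ℕ) (x : ℝ) : |haarP2 j k x| ≤ 1 / (4 * ((2 : ℝ) ^ j) ^ 2) := by
  have hwidth : (((k : ℝ) + 1 / 2) / 2 ^ j - k / 2 ^ j) ^ 2 = 1 / (4 * ((2 : ℝ) ^ j) ^ 2) := by
    field_simp
    ring
  rw [haarP2_eq_ramp_sq, ← hwidth]
  exact abs_ramp_sq_second_difference_le (by gcongr; norm_num) (by ring) x

theorem haarP2_product_integral_bound_general (j k j' k' : ℕ) :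
    ∫ x in (0 : ℝ)..1, haarP2 j k x * haarP2 j' k' x
      ≤ 1 / (16 * ((2 : ℝ) ^ j) ^ 2 * ((2 : ℝ) ^ j') ^ 2) := by
  have hbound : ∀ x ∈ Ι (0 : ℝ) 1, ‖haarP2 j k x * haarP2 j' k' x‖
      ≤ 1 / (4 * ((2 : ℝ) ^ j) ^ 2) * (1 / (4 * ((2 : ℝ) ^ j') ^ 2)) := fun x _ => by
    rw [norm_mul, Real.norm_eq_abs, Real.norm_eq_abs]
    exact mul_le_mul (abs_haarP2_le j k x) (abs_haarP2_le j' k' x) (abs_nonneg _)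
      (by positivity)
  calc ∫ x in (0 : ℝ)..1, haarP2 j k x * haarP2 j' k' x
      ≤ ‖∫ x in (0 : ℝ)..1, haarP2 j k x * haarP2 j' k' x‖ := Real.le_norm_self _
    _ ≤ 1 / (4 * ((2 : ℝ) ^ j) ^ 2) * (1 / (4 * ((2 : ℝ) ^ j') ^ 2)) * |1 - 0| :=
      norm_integral_le_of_norm_le_const hbound
    _ = 1 / (16 * ((2 : ℝ) ^ j) ^ 2 * ((2 : ℝ) ^ j') ^ 2) := by
      rw [sub_zero, abs_one]
      ring

theorem haarP2_product_integral_bound (j k j' k' : ℕ) (hk : k < 2 ^ j) (hk' : k' < 2 ^ j') :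
    ∫ x in (0 : ℝ)..1, haarP2 j k x * haarP2 j' k' x
      ≤ 1 / (16 * ((2 : ℝ) ^ j) ^ 2 * ((2 : ℝ) ^ j') ^ 2) :=
  haarP2_product_integral_bound_general j k j' k'
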